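/- arXiv:1705.00831 — 2 statements merged into one kernel-verified Lean document; each statement's English description precedes it below -/
import Mathlib

section
/- Let k ≥ 2 and ε, δ > 0, and set t = (e^ε + (δ/2)(k-1)) / (e^ε + k - 1). Then for any element q in a finite set HL of size k, the randomized mechanism that outputs q with probability t and outputs a uniformly random element of HL \ {q} with probability 1−t satisfies: for all q, q', y ∈ HL, Pr[L(q) = y] ≤ e^ε · Pr[L(q') = y] + δ/2. -/
/-- Probability that the k-ary randomized-response mechanism on input `q`
outputs `y`: `q` itself with probability `t`, and each other element of the
head list with probability `(1-t)/(k-1)`. -/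
noncomputable def rrProb {α : Type*} [DecidableEq α] (t : ℝ) (k : ℕ) (q y : α) : ℝ :=
  if y = q then t else (1 - t) / (k - 1)

theorem rr_pointwise_dp {α : Type*} [DecidableEq α] (HL : Finset α) (k : ℕ)
    (ε δ : ℝ) (hk : 2 ≤ k) (hHL : HL.card = k) (hε : 0 < ε) (hδ : 0 < δ)
    (t : ℝ) (ht : t = (Real.exp ε + (δ / 2) * (k - 1)) / (Real.exp ε + k - 1)) :
    ∀ q ∈ HL, ∀ q' ∈ HL, ∀ y ∈ HL,
      rrProb t k q y ≤ Real.exp ε * rrProb t k q' y + δ / 2 := by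
  intro q hq q' hq' y hy
  have hk2 : (2:ℝ) ≤ (k:ℝ) := by exact_mod_cast hk
  have hE1 : 1 < Real.exp ε := by
    have := Real.add_one_le_exp ε; linarith
  set E := Real.exp ε with hE
  have hKpos : (0:ℝ) < (k:ℝ) - 1 := by linarith
  have hD : 0 < E + (k:ℝ) - 1 := by linarith
  set u : ℝ := (1 - t) / ((k:ℝ) - 1) with hu
  have htpos : 0 < t := by rw [ht]; positivity
  have htD : t * (E + (k:ℝ) - 1) = E + (δ/2) * ((k:ℝ) - 1) := by
    rw [ht]; field_simp
  have hu2 : u * (E + (k:ℝ) - 1) = 1 - δ/2 := by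
    rw [hu, ht]; field_simp; ring
  have key : t - δ/2 = E * u := by
    have h0 : (t - δ/2 - E * u) * (E + (k:ℝ) - 1) = 0 := by
      linear_combination htD - E * hu2
    rcases mul_eq_zero.mp h0 with h | h
    · linarith
    · linarith
  unfold rrProb
  simp only [← hu]
  split_ifs with h1 h2 h2
  · nlinarith [mul_pos (sub_pos.mpr hE1) htpos]
  · linarith [key]
  · nlinarith [key, mul_pos (mul_pos (sub_pos.mpr hE1) htpos) (by linarith : (0:ℝ) < E + 1)]
  · nlinarith [hu2, mul_pos (sub_pos.mpr hE1) hD]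
end

section
/- Let p̂ = (1/n)(Σ X_j + Y) with X_j i.i.d. Bernoulli(p) and Y independent Laplace(b). Then E[ (n/(n−1))·( p̂(1−p̂)/n + 2b²/n² ) ] = Var[p̂] for n ≥ 2; i.e., the Bessel-corrected expression (n/(n−1))(p̂(1−p̂)/n + 2(b/n)²) is an unbiased estimator of the variance of p̂. -/
/-!
`p̂` is `1/n` times the sum of the `n + 1` independent variables `X₁, …, Xₙ, Y`, so
`E p̂ = p` and `Var p̂ = (n p (1 - p) + 2 b²) / n²`, the Laplace noise contributing its second
moment `2 b²`. Since `E[p̂ (1 - p̂)] = p (1 - p) - Var p̂`, the bracket has expectation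
`p (1 - p) / n - Var p̂ / n + 2 b² / n² = ((n - 1) / n) Var p̂`, which the factor `n / (n - 1)`
corrects.
-/

open MeasureTheory ProbabilityTheory

/-- The Bernoulli(p) distribution on ℝ: mass `p` at `1` and `1 - p` at `0`. -/
noncomputable def bernoulliReal (p : ℝ) : Measure ℝ :=
  ENNReal.ofReal p • Measure.dirac 1 + ENNReal.ofReal (1 - p) • Measure.dirac 0

/-- The Laplace distribution with mean 0 and scale `b`. -/
noncomputable def laplaceMeasure (b : ℝ) : Measure ℝ :=
  volume.withDensity fun y => ENNReal.ofReal ((1 / (2 * b)) * Real.exp (-|y| / b))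

section Bernoulli

variable {p : ℝ}

lemma integrable_bernoulliReal (f : ℝ → ℝ) : Integrable f (bernoulliReal p) :=
  ((integrable_dirac (by simp)).smul_measure ENNReal.ofReal_ne_top).add_measure
    ((integrable_dirac (by simp)).smul_measure ENNReal.ofReal_ne_top)

lemma integral_bernoulliReal (hp0 : 0 ≤ p) (hp1 : p ≤ 1) (f : ℝ → ℝ) :
    ∫ x, f x ∂bernoulliReal p = p * f 1 + (1 - p) * f 0 := by
  rw [bernoulliReal, integral_add_measure, integral_smul_measure, integral_smul_measure,
    integral_dirac, integral_dirac, ENNReal.toReal_ofReal hp0,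
    ENNReal.toReal_ofReal (sub_nonneg.mpr hp1), smul_eq_mul, smul_eq_mul]
  all_goals exact (integrable_dirac (by simp)).smul_measure ENNReal.ofReal_ne_top

lemma integral_id_bernoulliReal (hp0 : 0 ≤ p) (hp1 : p ≤ 1) :
    ∫ x, x ∂bernoulliReal p = p := by
  simpa using integral_bernoulliReal hp0 hp1 id

lemma variance_id_bernoulliReal (hp0 : 0 ≤ p) (hp1 : p ≤ 1) :
    Var[id; bernoulliReal p] = p * (1 - p) := by
  rw [variance_eq_integral aemeasurable_id, integral_bernoulliReal hp0 hp1]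
  simp only [id_eq, integral_id_bernoulliReal hp0 hp1]
  ring

lemma memLp_id_bernoulliReal : MemLp id 2 (bernoulliReal p) :=
  (memLp_two_iff_integrable_sq aestronglyMeasurable_id).mpr (integrable_bernoulliReal _)

end Bernoulli

section Laplace

variable {b : ℝ}

lemma integral_laplaceMeasure (hb : 0 ≤ b) (g : ℝ → ℝ) :
    ∫ y, g y ∂laplaceMeasure b = ∫ y, (1 / (2 * b)) * Real.exp (-|y| / b) * g y := by
  rw [laplaceMeasure, integral_withDensity_eq_integral_toReal_smul (by fun_prop)
    (.of_forall fun _ => ENNReal.ofReal_lt_top)]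
  simp only [smul_eq_mul]
  congr with y
  rw [ENNReal.toReal_ofReal (by positivity)]

lemma integral_id_laplaceMeasure (hb : 0 ≤ b) : ∫ y, y ∂laplaceMeasure b = 0 := by
  rw [integral_laplaceMeasure hb, ← neg_eq_self, ← integral_neg, ← integral_neg_eq_self]
  simp only [abs_neg, mul_neg, neg_neg]

lemma integral_sq_laplaceMeasure (hb : 0 < b) : ∫ y, y ^ 2 ∂laplaceMeasure b = 2 * b ^ 2 := by
  set f : ℝ → ℝ := fun t => (1 / (2 * b)) * Real.exp (-t / b) * t ^ 2
  have hhalf : ∫ t in Set.Ioi 0, f t = b ^ 2 :=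
    calc ∫ t in Set.Ioi 0, f t
        = (1 / (2 * b)) * ∫ t in Set.Ioi 0, t ^ ((3 : ℝ) - 1) * Real.exp (-(1 / b * t)) := by
          rw [← integral_const_mul]
          refine setIntegral_congr_fun measurableSet_Ioi fun t _ => ?_
          rw [show (3 : ℝ) - 1 = (2 : ℕ) by norm_num, Real.rpow_natCast]
          simp only [f]
          ring_nf
      _ = (1 / (2 * b)) * ((1 / (1 / b)) ^ (3 : ℝ) * Real.Gamma 3) := by
          rw [Real.integral_rpow_mul_exp_neg_mul_Ioi (by norm_num) (by positivity)]
      _ = b ^ 2 := by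
          rw [show Real.Gamma 3 = 2 by simp, one_div_one_div,
            show (3 : ℝ) = (3 : ℕ) by norm_num, Real.rpow_natCast]
          field_simp
  calc ∫ y, y ^ 2 ∂laplaceMeasure b = ∫ y, f |y| := by
        simp only [integral_laplaceMeasure hb.le, f, sq_abs]
    _ = 2 * ∫ t in Set.Ioi 0, f t := integral_comp_abs
    _ = 2 * b ^ 2 := by rw [hhalf]

lemma memLp_id_laplaceMeasure (hb : 0 < b) : MemLp id 2 (laplaceMeasure b) := by
  -- a function that is not integrable has integral `0`
  refine (memLp_two_iff_integrable_sq aestronglyMeasurable_id).mpr (.of_integral_ne_zero ?_)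
  simp only [id, integral_sq_laplaceMeasure hb]
  positivity

lemma variance_id_laplaceMeasure (hb : 0 < b) : Var[id; laplaceMeasure b] = 2 * b ^ 2 := by
  rw [variance_of_integral_eq_zero aemeasurable_id (integral_id_laplaceMeasure hb.le)]
  exact integral_sq_laplaceMeasure hb

end Laplace

lemma integral_mul_one_sub {Ω : Type*} [MeasurableSpace Ω] {μ : Measure Ω}
    [IsProbabilityMeasure μ] {Z : Ω → ℝ} (hZ : MemLp Z 2 μ) :
    ∫ ω, Z ω * (1 - Z ω) ∂μ = μ[Z] * (1 - μ[Z]) - Var[Z; μ] := by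
  have hexpand : ∀ ω, Z ω * (1 - Z ω) = Z ω - Z ω ^ 2 := fun ω => by ring
  rw [integral_congr_ae (.of_forall hexpand), integral_sub (hZ.integrable one_le_two)
    hZ.integrable_sq, variance_eq_sub hZ]
  simp only [Pi.pow_apply]
  ring

section NoisySum

variable {Ω : Type*} [MeasurableSpace Ω] {μ : Measure Ω} {n : ℕ} {p b : ℝ}
  {X : Fin n → Ω → ℝ} {Y : Ω → ℝ}

lemma memLp_two_option_elim (hb : 0 < b) (hXmeas : ∀ j, Measurable (X j))
    (hYmeas : Measurable Y) (hXdist : ∀ j, μ.map (X j) = bernoulliReal p)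
    (hYdist : μ.map Y = laplaceMeasure b) (i : Option (Fin n)) :
    MemLp (Option.elim i Y X) 2 μ := by
  rcases i with _ | j
  · exact (hYdist ▸ memLp_id_laplaceMeasure hb).comp_of_map hYmeas.aemeasurable
  · exact (hXdist j ▸ memLp_id_bernoulliReal).comp_of_map (hXmeas j).aemeasurable

lemma integral_sum_option_elim [IsFiniteMeasure μ] (hp0 : 0 ≤ p) (hp1 : p ≤ 1) (hb : 0 < b)
    (hXmeas : ∀ j, Measurable (X j)) (hYmeas : Measurable Y)
    (hXdist : ∀ j, μ.map (X j) = bernoulliReal p) (hYdist : μ.map Y = laplaceMeasure b) :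
    μ[∑ i, Option.elim i Y X] = n * p := by
  have hX : ∀ j, μ[X j] = p := fun j => by
    rw [← integral_id_bernoulliReal hp0 hp1, ← hXdist j]
    exact (integral_map (hXmeas j).aemeasurable aestronglyMeasurable_id).symm
  have hY : μ[Y] = 0 := by
    rw [← integral_id_laplaceMeasure hb.le, ← hYdist]
    exact (integral_map hYmeas.aemeasurable aestronglyMeasurable_id).symm
  simp only [Finset.sum_apply]
  rw [integral_finsetSum _ fun i _ =>
    (memLp_two_option_elim hb hXmeas hYmeas hXdist hYdist i).integrable one_le_two,
    Fintype.sum_option]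
  simp [hX, hY]

lemma variance_sum_option_elim (hp0 : 0 ≤ p) (hp1 : p ≤ 1) (hb : 0 < b)
    (hXmeas : ∀ j, Measurable (X j)) (hYmeas : Measurable Y)
    (hXdist : ∀ j, μ.map (X j) = bernoulliReal p) (hYdist : μ.map Y = laplaceMeasure b)
    (hindep : iIndepFun (fun i : Option (Fin n) => Option.elim i Y X) μ) :
    Var[∑ i, Option.elim i Y X; μ] = n * (p * (1 - p)) + 2 * b ^ 2 := by
  have hX : ∀ j, Var[X j; μ] = p * (1 - p) := fun j => by
    rw [← variance_id_map (hXmeas j).aemeasurable, hXdist j, variance_id_bernoulliReal hp0 hp1]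
  have hY : Var[Y; μ] = 2 * b ^ 2 := by
    rw [← variance_id_map hYmeas.aemeasurable, hYdist, variance_id_laplaceMeasure hb]
  rw [IndepFun.variance_sum (fun i _ => memLp_two_option_elim hb hXmeas hYmeas hXdist hYdist i)
    fun i _ j _ hij => hindep.indepFun hij, Fintype.sum_option]
  simp [hX, hY]
  ring

end NoisySum

/-- With `p̂ = (1/n)(∑ X_j + Y)` for `X_j` i.i.d. Bernoulli(p) and `Y` an
independent Laplace(0, b), the Bessel-corrected expression
`(n/(n-1))(p̂(1-p̂)/n + 2(b/n)²)` is an unbiased estimator of `Var[p̂]`. -/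
theorem bessel_corrected_unbiased {Ω : Type*} [MeasurableSpace Ω]
    (μ : Measure Ω) [IsProbabilityMeasure μ] (n : ℕ) (hn : 2 ≤ n)
    (p b : ℝ) (hp0 : 0 ≤ p) (hp1 : p ≤ 1) (hb : 0 < b)
    (X : Fin n → Ω → ℝ) (Y : Ω → ℝ)
    (hXmeas : ∀ j, Measurable (X j)) (hYmeas : Measurable Y)
    (hXdist : ∀ j, μ.map (X j) = bernoulliReal p)
    (hYdist : μ.map Y = laplaceMeasure b)
    (hindep : iIndepFun
      (fun i : Option (Fin n) => Option.elim i Y X) μ)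
    (phat : Ω → ℝ) (hphat : phat = fun ω => (1 / (n : ℝ)) * (∑ j, X j ω + Y ω)) :
    μ[fun ω => ((n : ℝ) / (n - 1)) *
        (phat ω * (1 - phat ω) / n + 2 * (b / n) ^ 2)]
      = variance phat μ := by
  have hsum : phat = fun ω => (1 / (n : ℝ)) * (∑ i, Option.elim i Y X) ω := by
    simp [hphat, Fintype.sum_option, add_comm]
  have hphat2 : MemLp phat 2 μ := hsum ▸ (memLp_finsetSum' _ fun i _ =>
    memLp_two_option_elim hb hXmeas hYmeas hXdist hYdist i).const_mul _
  have hint : Integrable (fun ω => phat ω * (1 - phat ω)) μ :=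
    hphat2.integrable_mul ((memLp_const 1).sub hphat2)
  have hn2 : (2 : ℝ) ≤ n := by exact_mod_cast hn
  have hn0 : (n : ℝ) ≠ 0 := by linarith
  have hn1 : (n : ℝ) - 1 ≠ 0 := by linarith
  rw [integral_const_mul, integral_add (hint.div_const _) (integrable_const _), integral_div,
    integral_mul_one_sub hphat2, integral_const, probReal_univ, one_smul, hsum,
    integral_const_mul, variance_const_mul,
    integral_sum_option_elim hp0 hp1 hb hXmeas hYmeas hXdist hYdist,
    variance_sum_option_elim hp0 hp1 hb hXmeas hYmeas hXdist hYdist hindep]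
  field_simp
  ring
end
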